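/- Let G be an ample groupoid such that G⁰ is σ-compact, and suppose that K ⊆ G⁰ is clopen and G-full. Then there is an open bisection Y ⊆ G × ℛ such that r(Y) = G⁰ × ℕ and s(Y) = K × ℕ. -/

import Mathlib

universe u v w

/-- An (algebraic) groupoid structure on a type `G` of arrows.  The multiplication is a total
function, but all axioms involving `mul a b` are only imposed when `a` and `b` are composable,
i.e. when `src a = rng b`.  Units are the common values of `src` and `rng`. -/
structure GroupoidStruct (G : Type u) where
  src : G → G
  rng : G → G
  mul : G → G → G
  inv : G → G
  src_src : ∀ a, src (src a) = src a
  rng_src : ∀ a, rng (src a) = src a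
  src_rng : ∀ a, src (rng a) = rng a
  rng_rng : ∀ a, rng (rng a) = rng a
  mul_assoc : ∀ a b c, src a = rng b → src b = rng c → mul (mul a b) c = mul a (mul b c)
  src_mul : ∀ a b, src a = rng b → src (mul a b) = src b
  rng_mul : ∀ a b, src a = rng b → rng (mul a b) = rng a
  mul_src : ∀ a, mul a (src a) = a
  rng_mul_self : ∀ a, mul (rng a) a = a
  src_inv : ∀ a, src (inv a) = rng a
  rng_inv : ∀ a, rng (inv a) = src a
  mul_inv : ∀ a, mul a (inv a) = rng a
  inv_mul : ∀ a, mul (inv a) a = src a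

namespace GroupoidStruct

variable {G : Type u} {H : Type v}

/-- The unit space `G⁰` of a groupoid. -/
def units (S : GroupoidStruct G) : Set G := {x | S.src x = x ∧ S.rng x = x}

/-- The range map, viewed as a map `G → G⁰`. -/
def rngMap (S : GroupoidStruct G) (g : G) : S.units := ⟨S.rng g, S.src_rng g, S.rng_rng g⟩

/-- The source map, viewed as a map `G → G⁰`. -/
def srcMap (S : GroupoidStruct G) (g : G) : S.units := ⟨S.src g, S.src_src g, S.rng_src g⟩

/-- A topological groupoid: inversion is continuous and multiplication is continuous on the
set of composable pairs. -/
structure IsTopologicalGroupoid [TopologicalSpace G] (S : GroupoidStruct G) : Prop where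
  continuous_inv : Continuous S.inv
  continuousOn_mul :
    ContinuousOn (fun p : G × G => S.mul p.1 p.2) {p : G × G | S.src p.1 = S.rng p.2}

/-- An ample groupoid: a topological groupoid whose topology has a basis of compact open sets,
whose unit space is Hausdorff, and whose range and source maps are local homeomorphisms onto
the unit space. -/
structure IsAmple [TopologicalSpace G] (S : GroupoidStruct G)
    extends IsTopologicalGroupoid S : Prop where
  compact_open_basis : ∃ B : Set (Set G),
    (∀ U ∈ B, IsCompact U ∧ IsOpen U) ∧ TopologicalSpace.IsTopologicalBasis B
  t2_units : T2Space S.units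
  isLocalHomeomorph_rngMap : IsLocalHomeomorph S.rngMap
  isLocalHomeomorph_srcMap : IsLocalHomeomorph S.srcMap

/-- `K ⊆ G⁰` is `G`-full if `r(GK) = G⁰`, where `GK = s⁻¹(K)`. -/
def IsFull (S : GroupoidStruct G) (K : Set G) : Prop := S.rng '' (S.src ⁻¹' K) = S.units

/-- `K` is an open subset of the unit space (in the subspace topology of `G⁰`). -/
def IsUnitOpen [TopologicalSpace G] (S : GroupoidStruct G) (K : Set G) : Prop :=
  K ⊆ S.units ∧ IsOpen {x : S.units | (x : G) ∈ K}

/-- `K` is a clopen subset of the unit space (in the subspace topology of `G⁰`). -/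
def IsUnitClopen [TopologicalSpace G] (S : GroupoidStruct G) (K : Set G) : Prop :=
  K ⊆ S.units ∧ IsClopen {x : S.units | (x : G) ∈ K}

/-- `K` is a compact open subset of the unit space. -/
def IsUnitCompactOpen [TopologicalSpace G] (S : GroupoidStruct G) (K : Set G) : Prop :=
  K ⊆ S.units ∧ IsCompact K ∧ IsOpen {x : S.units | (x : G) ∈ K}

/-- An open bisection: an open set on which both the range and the source map restrict to
homeomorphisms onto their images (i.e. are topological embeddings). -/
def IsOpenBisection [TopologicalSpace G] (S : GroupoidStruct G) (U : Set G) : Prop :=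
  IsOpen U ∧ Topology.IsEmbedding (U.restrict S.rng) ∧ Topology.IsEmbedding (U.restrict S.src)

/-- A compact open bisection. -/
def IsCompactOpenBisection [TopologicalSpace G] (S : GroupoidStruct G) (U : Set G) : Prop :=
  IsCompact U ∧ S.IsOpenBisection U

/-- The product of two groupoids, with coordinatewise operations. -/
def prod (S : GroupoidStruct G) (T : GroupoidStruct H) : GroupoidStruct (G × H) where
  src p := (S.src p.1, T.src p.2)
  rng p := (S.rng p.1, T.rng p.2)
  mul p q := (S.mul p.1 q.1, T.mul p.2 q.2)
  inv p := (S.inv p.1, T.inv p.2)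
  src_src a := Prod.ext_iff.mpr ⟨S.src_src _, T.src_src _⟩
  rng_src a := Prod.ext_iff.mpr ⟨S.rng_src _, T.rng_src _⟩
  src_rng a := Prod.ext_iff.mpr ⟨S.src_rng _, T.src_rng _⟩
  rng_rng a := Prod.ext_iff.mpr ⟨S.rng_rng _, T.rng_rng _⟩
  mul_assoc a b c h1 h2 := by
    obtain ⟨h1a, h1b⟩ := Prod.ext_iff.mp h1
    obtain ⟨h2a, h2b⟩ := Prod.ext_iff.mp h2
    exact Prod.ext_iff.mpr ⟨S.mul_assoc _ _ _ h1a h2a, T.mul_assoc _ _ _ h1b h2b⟩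
  src_mul a b h := by
    obtain ⟨ha, hb⟩ := Prod.ext_iff.mp h
    exact Prod.ext_iff.mpr ⟨S.src_mul _ _ ha, T.src_mul _ _ hb⟩
  rng_mul a b h := by
    obtain ⟨ha, hb⟩ := Prod.ext_iff.mp h
    exact Prod.ext_iff.mpr ⟨S.rng_mul _ _ ha, T.rng_mul _ _ hb⟩
  mul_src a := Prod.ext_iff.mpr ⟨S.mul_src _, T.mul_src _⟩
  rng_mul_self a := Prod.ext_iff.mpr ⟨S.rng_mul_self _, T.rng_mul_self _⟩
  src_inv a := Prod.ext_iff.mpr ⟨S.src_inv _, T.src_inv _⟩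
  rng_inv a := Prod.ext_iff.mpr ⟨S.rng_inv _, T.rng_inv _⟩
  mul_inv a := Prod.ext_iff.mpr ⟨S.mul_inv _, T.mul_inv _⟩
  inv_mul a := Prod.ext_iff.mpr ⟨S.inv_mul _, T.inv_mul _⟩

/-- The full equivalence relation `ℛ = ℕ × ℕ`, regarded as a (discrete, principal) groupoid
with unit space `ℕ`. -/
def Rho : GroupoidStruct (ℕ × ℕ) where
  src p := (p.2, p.2)
  rng p := (p.1, p.1)
  mul p q := (p.1, q.2)
  inv p := (p.2, p.1)
  src_src _ := rfl
  rng_src _ := rfl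
  src_rng _ := rfl
  rng_rng _ := rfl
  mul_assoc _ _ _ _ _ := rfl
  src_mul _ _ _ := rfl
  rng_mul _ _ _ := rfl
  mul_src _ := rfl
  rng_mul_self _ := rfl
  src_inv _ := rfl
  rng_inv _ := rfl
  mul_inv _ := rfl
  inv_mul _ := rfl

/-- An isomorphism of topological groupoids: a homeomorphism of the arrow spaces respecting
all the groupoid operations. -/
structure GroupoidIso [TopologicalSpace G] [TopologicalSpace H]
    (S : GroupoidStruct G) (T : GroupoidStruct H) extends G ≃ₜ H where
  map_mul : ∀ a b, S.src a = S.rng b →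
    toHomeomorph (S.mul a b) = T.mul (toHomeomorph a) (toHomeomorph b)
  map_inv : ∀ a, toHomeomorph (S.inv a) = T.inv (toHomeomorph a)
  map_src : ∀ a, toHomeomorph (S.src a) = T.src (toHomeomorph a)
  map_rng : ∀ a, toHomeomorph (S.rng a) = T.rng (toHomeomorph a)

/-- The arrow space `G|_K = r⁻¹(K) ∩ s⁻¹(K)` of the restriction of `G` to `K ⊆ G⁰`,
with the subspace topology. -/
abbrev Restrict (S : GroupoidStruct G) (K : Set G) : Type u :=
  {g : G // S.rng g ∈ K ∧ S.src g ∈ K}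

variable (S : GroupoidStruct G) (K : Set G)

def rsrc (a : S.Restrict K) : S.Restrict K :=
  ⟨S.src a.1, by rw [S.rng_src]; exact a.2.2, by rw [S.src_src]; exact a.2.2⟩

def rrng (a : S.Restrict K) : S.Restrict K :=
  ⟨S.rng a.1, by rw [S.rng_rng]; exact a.2.1, by rw [S.src_rng]; exact a.2.1⟩

def rinv (a : S.Restrict K) : S.Restrict K :=
  ⟨S.inv a.1, by rw [S.rng_inv]; exact a.2.2, by rw [S.src_inv]; exact a.2.1⟩

open Classical in
noncomputable def rmul (a b : S.Restrict K) : S.Restrict K :=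
  if h : S.src a.1 = S.rng b.1 then
    ⟨S.mul a.1 b.1, by rw [S.rng_mul _ _ h]; exact a.2.1, by rw [S.src_mul _ _ h]; exact b.2.2⟩
  else a

@[simp] lemma rsrc_val (a : S.Restrict K) : (S.rsrc K a).1 = S.src a.1 := rfl
@[simp] lemma rrng_val (a : S.Restrict K) : (S.rrng K a).1 = S.rng a.1 := rfl
@[simp] lemma rinv_val (a : S.Restrict K) : (S.rinv K a).1 = S.inv a.1 := rfl

lemma rmul_val (a b : S.Restrict K) (h : S.src a.1 = S.rng b.1) :
    (S.rmul K a b).1 = S.mul a.1 b.1 := by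
  unfold rmul
  rw [dif_pos h]

/-- The restriction `G|_K` of a groupoid to a subset `K` of its unit space. -/
noncomputable def restrict : GroupoidStruct (S.Restrict K) where
  src := S.rsrc K
  rng := S.rrng K
  mul := S.rmul K
  inv := S.rinv K
  src_src a := Subtype.ext (S.src_src a.1)
  rng_src a := Subtype.ext (S.rng_src a.1)
  src_rng a := Subtype.ext (S.src_rng a.1)
  rng_rng a := Subtype.ext (S.rng_rng a.1)
  mul_assoc a b c h1 h2 := by
    have h1' : S.src a.1 = S.rng b.1 := congrArg Subtype.val h1
    have h2' : S.src b.1 = S.rng c.1 := congrArg Subtype.val h2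
    have hab := S.rmul_val K a b h1'
    have hbc := S.rmul_val K b c h2'
    apply Subtype.ext
    calc (S.rmul K (S.rmul K a b) c).1
        = S.mul (S.rmul K a b).1 c.1 :=
          S.rmul_val K _ _ (by rw [hab, S.src_mul _ _ h1']; exact h2')
      _ = S.mul (S.mul a.1 b.1) c.1 := by rw [hab]
      _ = S.mul a.1 (S.mul b.1 c.1) := S.mul_assoc _ _ _ h1' h2'
      _ = S.mul a.1 (S.rmul K b c).1 := by rw [hbc]
      _ = (S.rmul K a (S.rmul K b c)).1 :=
          (S.rmul_val K _ _ (by rw [hbc, S.rng_mul _ _ h2']; exact h1')).symm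
  src_mul a b h := by
    have h' : S.src a.1 = S.rng b.1 := congrArg Subtype.val h
    apply Subtype.ext
    show S.src (S.rmul K a b).1 = S.src b.1
    rw [S.rmul_val K a b h', S.src_mul _ _ h']
  rng_mul a b h := by
    have h' : S.src a.1 = S.rng b.1 := congrArg Subtype.val h
    apply Subtype.ext
    show S.rng (S.rmul K a b).1 = S.rng a.1
    rw [S.rmul_val K a b h', S.rng_mul _ _ h']
  mul_src a := by
    apply Subtype.ext
    rw [S.rmul_val K a _ (by rw [rsrc_val, S.rng_src]), rsrc_val]
    exact S.mul_src a.1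
  rng_mul_self a := by
    apply Subtype.ext
    rw [S.rmul_val K _ a (by rw [rrng_val, S.src_rng]), rrng_val]
    exact S.rng_mul_self a.1
  src_inv a := Subtype.ext (S.src_inv a.1)
  rng_inv a := Subtype.ext (S.rng_inv a.1)
  mul_inv a := by
    apply Subtype.ext
    rw [S.rmul_val K a _ (by rw [rinv_val, S.rng_inv]), rinv_val]
    exact S.mul_inv a.1
  inv_mul a := by
    apply Subtype.ext
    rw [S.rmul_val K _ a (by rw [rinv_val, S.src_inv]), rinv_val]
    exact S.inv_mul a.1

variable {S K}

/-- The data of a groupoid equivalence between `G` and `H`: a space `Z` carrying commuting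
free and proper continuous actions of `G` (on the left) and `H` (on the right), whose anchor
maps `ρ : Z → G⁰` and `σ : Z → H⁰` induce homeomorphisms `Z/H ≅ G⁰` and `G\Z ≅ H⁰`.
The latter conditions are encoded by requiring that the fibres of `ρ` are exactly the
`H`-orbits, that `ρ` is surjective onto `G⁰`, and that `ρ` is a topological quotient map onto
`G⁰` (and symmetrically for `σ`): this says precisely that the induced map `Z/H → G⁰` is a
homeomorphism. -/
structure GroupoidEquivalenceData [TopologicalSpace G] [TopologicalSpace H]
    (S : GroupoidStruct G) (T : GroupoidStruct H) (Z : Type w) [TopologicalSpace Z] where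
  ρ : Z → G
  σ : Z → H
  ρ_unit : ∀ z, ρ z ∈ S.units
  σ_unit : ∀ z, σ z ∈ T.units
  continuous_ρ : Continuous ρ
  continuous_σ : Continuous σ
  actL : G → Z → Z
  actR : Z → H → Z
  ρ_actL : ∀ g z, S.src g = ρ z → ρ (actL g z) = S.rng g
  σ_actL : ∀ g z, S.src g = ρ z → σ (actL g z) = σ z
  actL_unit : ∀ z, actL (ρ z) z = z
  actL_mul : ∀ g g' z, S.src g = S.rng g' → S.src g' = ρ z →
    actL (S.mul g g') z = actL g (actL g' z)
  σ_actR : ∀ z h, σ z = T.rng h → σ (actR z h) = T.src h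
  ρ_actR : ∀ z h, σ z = T.rng h → ρ (actR z h) = ρ z
  actR_unit : ∀ z, actR z (σ z) = z
  actR_mul : ∀ z h h', σ z = T.rng h → T.src h = T.rng h' →
    actR (actR z h) h' = actR z (T.mul h h')
  act_comm : ∀ g z h, S.src g = ρ z → σ z = T.rng h →
    actL g (actR z h) = actR (actL g z) h
  continuousOn_actL :
    ContinuousOn (fun p : G × Z => actL p.1 p.2) {p : G × Z | S.src p.1 = ρ p.2}
  continuousOn_actR :
    ContinuousOn (fun p : Z × H => actR p.1 p.2) {p : Z × H | σ p.1 = T.rng p.2}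
  free_actL : ∀ g z, S.src g = ρ z → actL g z = z → g = ρ z
  free_actR : ∀ z h, σ z = T.rng h → actR z h = z → h = σ z
  proper_actL : IsProperMap (fun p : {q : G × Z // S.src q.1 = ρ q.2} =>
    ((actL p.1.1 p.1.2, p.1.2) : Z × Z))
  proper_actR : IsProperMap (fun p : {q : Z × H // σ q.1 = T.rng q.2} =>
    ((actR p.1.1 p.1.2, p.1.1) : Z × Z))
  ρ_fiber_orbit : ∀ z z', ρ z = ρ z' ↔ ∃ h, σ z = T.rng h ∧ z' = actR z h
  σ_fiber_orbit : ∀ z z', σ z = σ z' ↔ ∃ g, S.src g = ρ z ∧ z' = actL g z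
  ρ_surj : Set.range ρ = S.units
  σ_surj : Set.range σ = T.units
  quotient_ρ : Topology.IsQuotientMap (fun z => (⟨ρ z, ρ_unit z⟩ : S.units))
  quotient_σ : Topology.IsQuotientMap (fun z => (⟨σ z, σ_unit z⟩ : T.units))

/-- `G` and `H` are groupoid equivalent if there exists a `G`–`H` equivalence. -/
def GroupoidEquivalent [TopologicalSpace G] [TopologicalSpace H]
    (S : GroupoidStruct G) (T : GroupoidStruct H) : Prop :=
  ∃ (Z : Type (max u v)) (_ : TopologicalSpace Z), Nonempty (GroupoidEquivalenceData S T Z)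

/-- Kakutani equivalence of ample groupoids: there are full clopen subsets `X ⊆ G⁰`, `Y ⊆ H⁰`
with `G|_X ≅ H|_Y`. -/
def KakutaniEquivalent [TopologicalSpace G] [TopologicalSpace H]
    (S : GroupoidStruct G) (T : GroupoidStruct H) : Prop :=
  ∃ (X : Set G) (Y : Set H), S.IsUnitClopen X ∧ S.IsFull X ∧ T.IsUnitClopen Y ∧ T.IsFull Y ∧
    Nonempty (GroupoidIso (S.restrict X) (T.restrict Y))

end GroupoidStruct

/-!
Since `G⁰` is σ-compact and `K` is full, `G⁰` is partitioned into clopen sets `r(V n)` for compact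
open bisections `V n` with sources in `K`. Sending the `n`-th piece of copy `t` into copy `(n, t)`
gives a bisection from `G⁰ × ℕ` into `K × ℕ`, and `K × ℕ ⊆ G⁰ × ℕ`; the bisection is built by
the Schröder–Bernstein construction for these two injections. Copies also carry a level, raised
by the inclusion, so that backward chains are finite and the Schröder–Bernstein pieces stay
clopen.
-/

open Function

namespace GroupoidStruct

lemma rng_mem_units {G : Type u} (S : GroupoidStruct G) (g : G) : S.rng g ∈ S.units :=
  ⟨S.src_rng g, S.rng_rng g⟩

lemma src_mem_units {G : Type u} (S : GroupoidStruct G) (g : G) : S.src g ∈ S.units :=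
  ⟨S.src_src g, S.rng_src g⟩

variable {X : Type*} [TopologicalSpace X] {G : Type u} [TopologicalSpace G] {S : GroupoidStruct G}

lemma isOpenBisection_of_injOn {T : GroupoidStruct X} {U : Set X}
    (hr : Continuous T.rng) (hro : IsOpenMap T.rng) (hs : Continuous T.src)
    (hso : IsOpenMap T.src) (hU : IsOpen U) (hrU : U.InjOn T.rng) (hsU : U.InjOn T.src) :
    T.IsOpenBisection U :=
  ⟨hU, (Topology.IsOpenEmbedding.of_continuous_injective_isOpenMap
      (hr.comp continuous_subtype_val) hrU.injective (hro.domRestrict hU)).isEmbedding,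
    (Topology.IsOpenEmbedding.of_continuous_injective_isOpenMap
      (hs.comp continuous_subtype_val) hsU.injective (hso.domRestrict hU)).isEmbedding⟩

lemma IsOpenBisection.injOn_rng {U : Set G} (hU : S.IsOpenBisection U) : U.InjOn S.rng :=
  Set.injOn_iff_injective.mpr hU.2.1.injective

lemma IsOpenBisection.injOn_src {U : Set G} (hU : S.IsOpenBisection U) : U.InjOn S.src :=
  Set.injOn_iff_injective.mpr hU.2.2.injective

lemma isUnitClopen_units : S.IsUnitClopen S.units :=
  ⟨subset_rfl, by simp only [Subtype.coe_prop, Set.setOf_true, isClopen_univ]⟩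

lemma IsUnitClopen.union {C D : Set G} (hC : S.IsUnitClopen C) (hD : S.IsUnitClopen D) :
    S.IsUnitClopen (C ∪ D) :=
  ⟨Set.union_subset hC.1 hD.1, hC.2.union hD.2⟩

lemma IsUnitClopen.diff {C D : Set G} (hC : S.IsUnitClopen C) (hD : S.IsUnitClopen D) :
    S.IsUnitClopen (C \ D) :=
  ⟨Set.diff_subset.trans hC.1, hC.2.diff hD.2⟩

namespace IsAmple

lemma continuous_rng (hS : S.IsAmple) : Continuous S.rng :=
  continuous_subtype_val.comp hS.isLocalHomeomorph_rngMap.continuous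

lemma continuous_src (hS : S.IsAmple) : Continuous S.src :=
  continuous_subtype_val.comp hS.isLocalHomeomorph_srcMap.continuous

/-- `s` is injective near a unit `u`, and an arrow `g` near `u` with `s g` near `u` has
`s (s g) = s g`, so `g = s g` is a unit. -/
lemma isOpen_units (hS : S.IsAmple) : IsOpen S.units := by
  refine isOpen_iff_forall_mem_open.mpr fun u hu => ?_
  obtain ⟨e, hue, he⟩ := hS.isLocalHomeomorph_srcMap u
  refine ⟨e.source ∩ S.src ⁻¹' e.source, fun g ⟨hg, hsg⟩ => ?_,
    e.open_source.inter (e.open_source.preimage hS.continuous_src), hue, by rwa [← hu.1] at hue⟩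
  have hg_eq : S.src g = g := e.injOn hsg hg <| by
    rw [← he]; exact Subtype.ext (S.src_src g)
  exact ⟨hg_eq, by rw [← hg_eq, S.rng_src]⟩

lemma isOpenMap_rng (hS : S.IsAmple) : IsOpenMap S.rng :=
  hS.isOpen_units.isOpenMap_subtype_val.comp hS.isLocalHomeomorph_rngMap.isOpenMap

lemma isOpenMap_src (hS : S.IsAmple) : IsOpenMap S.src :=
  hS.isOpen_units.isOpenMap_subtype_val.comp hS.isLocalHomeomorph_srcMap.isOpenMap

lemma isOpenBisection_of_injOn (hS : S.IsAmple) {U : Set G} (hU : IsOpen U)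
    (hrU : U.InjOn S.rng) (hsU : U.InjOn S.src) : S.IsOpenBisection U :=
  GroupoidStruct.isOpenBisection_of_injOn hS.continuous_rng hS.isOpenMap_rng
    hS.continuous_src hS.isOpenMap_src hU hrU hsU

lemma isOpenBisection_prod_Rho_of_injOn (hS : S.IsAmple) {U : Set (G × ℕ × ℕ)} (hU : IsOpen U)
    (hrU : U.InjOn (S.prod Rho).rng) (hsU : U.InjOn (S.prod Rho).src) :
    (S.prod Rho).IsOpenBisection U :=
  GroupoidStruct.isOpenBisection_of_injOn
    (hS.continuous_rng.prodMap continuous_of_discreteTopology)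
    (hS.isOpenMap_rng.prodMap fun _ _ => isOpen_discrete _)
    (hS.continuous_src.prodMap continuous_of_discreteTopology)
    (hS.isOpenMap_src.prodMap fun _ _ => isOpen_discrete _) hU hrU hsU

lemma isOpen_of_isUnitClopen (hS : S.IsAmple) {C : Set G} (hC : S.IsUnitClopen C) : IsOpen C := by
  simpa [Subtype.image_preimage_coe, Set.inter_eq_right.mpr hC.1] using
    hS.isOpen_units.isOpenMap_subtype_val (Subtype.val ⁻¹' C) hC.2.isOpen

lemma isClopen_rng_preimage (hS : S.IsAmple) {C : Set G} (hC : S.IsUnitClopen C) :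
    IsClopen (S.rng ⁻¹' C) :=
  hC.2.preimage hS.isLocalHomeomorph_rngMap.continuous

lemma isUnitClopen_rng_image (hS : S.IsAmple) {U : Set G} (hU : IsCompact U) (hUo : IsOpen U) :
    S.IsUnitClopen (S.rng '' U) := by
  have := hS.t2_units
  have himage : {x : S.units | (x : G) ∈ S.rng '' U} = S.rngMap '' U := by
    ext x; simp [rngMap, Subtype.ext_iff]
  refine ⟨Set.image_subset_iff.mpr fun g _ => S.rng_mem_units g, ?_⟩
  rw [himage]
  exact ⟨(hU.image hS.isLocalHomeomorph_rngMap.continuous).isClosed,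
    hS.isLocalHomeomorph_rngMap.isOpenMap U hUo⟩

lemma isUnitClopen_src_image (hS : S.IsAmple) {U : Set G} (hU : IsCompact U) (hUo : IsOpen U) :
    S.IsUnitClopen (S.src '' U) := by
  have := hS.t2_units
  have himage : {x : S.units | (x : G) ∈ S.src '' U} = S.srcMap '' U := by
    ext x; simp [srcMap, Subtype.ext_iff]
  refine ⟨Set.image_subset_iff.mpr fun g _ => S.src_mem_units g, ?_⟩
  rw [himage]
  exact ⟨(hU.image hS.isLocalHomeomorph_srcMap.continuous).isClosed,
    hS.isLocalHomeomorph_srcMap.isOpenMap U hUo⟩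

lemma exists_isCompactOpenBisection_subset (hS : S.IsAmple) {O : Set G} (hO : IsOpen O) {g : G}
    (hg : g ∈ O) : ∃ V, S.IsCompactOpenBisection V ∧ g ∈ V ∧ V ⊆ O := by
  obtain ⟨er, hger, hr⟩ := hS.isLocalHomeomorph_rngMap g
  obtain ⟨es, hges, hs⟩ := hS.isLocalHomeomorph_srcMap g
  obtain ⟨B, hBco, hB⟩ := hS.compact_open_basis
  obtain ⟨V, hVB, hgV, hVO⟩ := hB.exists_subset_of_mem_open (a := g)
    (u := er.source ∩ es.source ∩ O) ⟨⟨hger, hges⟩, hg⟩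
    ((er.open_source.inter es.open_source).inter hO)
  refine ⟨V, ⟨(hBco V hVB).1, hS.isOpenBisection_of_injOn (hBco V hVB).2 ?_ ?_⟩, hgV,
    fun x hx => (hVO hx).2⟩
  · refine fun x hx y hy hxy => er.injOn (hVO hx).1.1 (hVO hy).1.1 ?_
    rw [← hr]; exact Subtype.ext hxy
  · refine fun x hx y hy hxy => es.injOn (hVO hx).1.2 (hVO hy).1.2 ?_
    rw [← hs]; exact Subtype.ext hxy

end IsAmple

structure RangePartition (S : GroupoidStruct G) (K : Set G) where
  piece : ℕ → Set G
  isCompactOpenBisection : ∀ n, S.IsCompactOpenBisection (piece n)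
  src_image_subset : ∀ n, S.src '' piece n ⊆ K
  pairwise_disjoint : Pairwise (Disjoint on fun n => S.rng '' piece n)
  iUnion_rng_image : ⋃ n, S.rng '' piece n = S.units

namespace IsAmple

lemma exists_seq_isCompactOpenBisection (hS : S.IsAmple) (hc : IsSigmaCompact S.units)
    {K : Set G} (hK : IsOpen K) (hKf : S.IsFull K) :
    ∃ V : ℕ → Set G, (∀ n, S.IsCompactOpenBisection (V n) ∧ S.src '' V n ⊆ K) ∧
      ⋃ n, S.rng '' V n = S.units := by
  let 𝒱 := {V : Set G | S.IsCompactOpenBisection V ∧ S.src '' V ⊆ K}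
  have hcover : S.units ⊆ ⋃ V : 𝒱, S.rng '' V := by
    intro u hu
    rw [← hKf] at hu
    obtain ⟨g, hgK, rfl⟩ := hu
    obtain ⟨V, hV, hgV, hVK⟩ :=
      hS.exists_isCompactOpenBisection_subset (hK.preimage hS.continuous_src) hgK
    exact Set.mem_iUnion.mpr ⟨⟨V, hV, Set.image_subset_iff.mpr hVK⟩, g, hgV, rfl⟩
  obtain ⟨t, htc, ht⟩ := hc.isLindelof.elim_countable_subcover _
    (fun V : 𝒱 => hS.isOpenMap_rng _ V.2.1.2.1) hcover
  have : Nonempty 𝒱 := ⟨⟨∅, ⟨isCompact_empty, hS.isOpenBisection_of_injOn isOpen_empty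
    (Set.injOn_empty _) (Set.injOn_empty _)⟩, by simp⟩⟩
  obtain ⟨f, htf⟩ := Set.countable_iff_exists_subset_range.mp htc
  refine ⟨fun n => f n, fun n => (f n).2, subset_antisymm ?_ ?_⟩
  · exact Set.iUnion_subset fun n => Set.image_subset_iff.mpr fun g _ => S.rng_mem_units g
  · refine ht.trans (Set.iUnion₂_subset fun V hV => ?_)
    obtain ⟨n, rfl⟩ := htf hV
    exact Set.subset_iUnion (fun n => S.rng '' (f n : Set G)) n

lemma nonempty_rangePartition (hS : S.IsAmple) (hc : IsSigmaCompact S.units)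
    {K : Set G} (hK : IsOpen K) (hKf : S.IsFull K) : Nonempty (S.RangePartition K) := by
  obtain ⟨V, hV, hcover⟩ := hS.exists_seq_isCompactOpenBisection hc hK hKf
  let A := disjointed fun n => S.rng '' V n
  have hA : ∀ n, S.IsUnitClopen (A n) := fun n =>
    disjointedRec (fun _ _ ht => ht.diff (hS.isUnitClopen_rng_image (hV _).1.1 (hV _).1.2.1))
      (hS.isUnitClopen_rng_image (hV n).1.1 (hV n).1.2.1)
  have hrA : ∀ n, S.rng '' (V n ∩ S.rng ⁻¹' A n) = A n := fun n => by
    rw [Set.image_inter_preimage,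
      Set.inter_eq_right.mpr (disjointed_subset (fun n => S.rng '' V n) n)]
  refine ⟨⟨fun n => V n ∩ S.rng ⁻¹' A n, fun n => ⟨?_, ?_⟩, fun n => ?_, ?_, ?_⟩⟩
  · exact (hV n).1.1.inter_right (hS.isClopen_rng_preimage (hA n)).isClosed
  · exact hS.isOpenBisection_of_injOn
      ((hV n).1.2.1.inter (hS.isClopen_rng_preimage (hA n)).isOpen)
      ((hV n).1.2.injOn_rng.mono Set.inter_subset_left)
      ((hV n).1.2.injOn_src.mono Set.inter_subset_left)
  · exact (Set.image_mono Set.inter_subset_left).trans (hV n).2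
  · simpa only [hrA] using disjoint_disjointed _
  · simpa only [hrA, A, iUnion_disjointed] using hcover

end IsAmple

end GroupoidStruct

namespace GroupoidStruct.RangePartition

variable {G : Type u} [TopologicalSpace G] {S : GroupoidStruct G} {K : Set G}
  (P : S.RangePartition K)

lemma exists_mem_piece {u : G} (hu : u ∈ S.units) : ∃ n, ∃ g ∈ P.piece n, S.rng g = u := by
  rw [← P.iUnion_rng_image] at hu
  simpa only [Set.mem_iUnion, Set.mem_image] using hu

lemma eq_of_rng_eq {m n : ℕ} {g g' : G} (hg : g ∈ P.piece m) (hg' : g' ∈ P.piece n)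
    (h : S.rng g = S.rng g') : m = n ∧ g = g' := by
  obtain rfl : m = n := by
    by_contra hmn
    exact Set.disjoint_left.mp (P.pairwise_disjoint hmn) ⟨g, hg, rfl⟩ ⟨g', hg', h.symm⟩
  exact ⟨rfl, (P.isCompactOpenBisection m).2.injOn_rng hg hg' h⟩

/-- Copy `Nat.pair L t` of `G⁰` or `K` has level `L`; piece `n` of copy `(L, t)` of `G⁰` is sent
into copy `(L, (n, t))` of `K`, and copy `(L, t)` of `K` includes into copy `(L + 1, t)` of `G⁰`.
`P.forward L t` is the part of copy `(L, t)` of `G⁰` whose backward chain starts outside the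
image of the inclusion: the bisection sends it forward through the pieces, and the rest back. -/
def forward : ℕ → ℕ → Set G
  | 0, _ => S.units
  | L + 1, t => (S.units \ K) ∪
      S.src '' (P.piece (Nat.unpair t).1 ∩ S.rng ⁻¹' forward L (Nat.unpair t).2)

lemma forward_succ_pair (L n t : ℕ) : P.forward (L + 1) (Nat.pair n t) =
    (S.units \ K) ∪ S.src '' (P.piece n ∩ S.rng ⁻¹' P.forward L t) := by
  simp only [forward, Nat.unpair_pair]

lemma src_mem_forward_succ {L n t : ℕ} {g : G} (hg : g ∈ P.piece n)
    (hgW : S.rng g ∈ P.forward L t) : S.src g ∈ P.forward (L + 1) (Nat.pair n t) := by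
  rw [forward_succ_pair]
  exact Or.inr ⟨g, ⟨hg, hgW⟩, rfl⟩

def bisection : Set (G × ℕ × ℕ) :=
  (⋃ (L : ℕ) (n : ℕ) (t : ℕ), (P.piece n ∩ S.rng ⁻¹' P.forward L t) ×ˢ
      {(Nat.pair L t, Nat.pair L (Nat.pair n t))}) ∪
    ⋃ (L : ℕ) (t : ℕ), (K \ P.forward (L + 1) t) ×ˢ {(Nat.pair (L + 1) t, Nat.pair L t)}

lemma mem_bisection {g : G} {i j : ℕ} : (g, i, j) ∈ P.bisection ↔
    (∃ L n t, (g ∈ P.piece n ∧ S.rng g ∈ P.forward L t) ∧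
      i = Nat.pair L t ∧ j = Nat.pair L (Nat.pair n t)) ∨
    ∃ L t, (g ∈ K ∧ g ∉ P.forward (L + 1) t) ∧ i = Nat.pair (L + 1) t ∧ j = Nat.pair L t := by
  simp only [bisection, Set.mem_union, Set.mem_iUnion, Set.mem_prod, Set.mem_singleton_iff,
    Prod.mk.injEq, Set.mem_inter_iff, Set.mem_preimage, Set.mem_diff]

lemma isUnitClopen_forward (hS : S.IsAmple) (hK : S.IsUnitClopen K) :
    ∀ L t, S.IsUnitClopen (P.forward L t)
  | 0, _ => isUnitClopen_units
  | L + 1, t => by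
    have hW := hS.isClopen_rng_preimage (isUnitClopen_forward hS hK L (Nat.unpair t).2)
    have hV := P.isCompactOpenBisection (Nat.unpair t).1
    exact (isUnitClopen_units.diff hK).union
      (hS.isUnitClopen_src_image (hV.1.inter_right hW.isClosed) (hV.2.1.inter hW.isOpen))

lemma isOpen_bisection (hS : S.IsAmple) (hK : S.IsUnitClopen K) : IsOpen P.bisection := by
  refine (isOpen_iUnion fun L => isOpen_iUnion fun n => isOpen_iUnion fun t => ?_).union
    (isOpen_iUnion fun L => isOpen_iUnion fun t => ?_)
  · exact ((P.isCompactOpenBisection n).2.1.inter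
      (hS.isClopen_rng_preimage (P.isUnitClopen_forward hS hK L t)).isOpen).prod
      (isOpen_discrete _)
  · exact (hS.isOpen_of_isUnitClopen (hK.diff (P.isUnitClopen_forward hS hK _ t))).prod
      (isOpen_discrete _)

lemma injOn_rng_bisection (hK : K ⊆ S.units) : P.bisection.InjOn (S.prod Rho).rng := by
  rintro ⟨g, i, j⟩ hp ⟨g', i', j'⟩ hp' he
  obtain ⟨hr, rfl, -⟩ : S.rng g = S.rng g' ∧ i = i' ∧ i = i' := by
    simpa only [prod, Rho, Prod.mk.injEq] using he
  rw [mem_bisection] at hp hp'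
  rcases hp with ⟨L, n, t, ⟨hg, hgW⟩, rfl, rfl⟩ | ⟨L, t, ⟨hgK, hgW⟩, rfl, rfl⟩ <;>
  rcases hp' with ⟨L', n', t', ⟨hg', hgW'⟩, hi, rfl⟩ | ⟨L', t', ⟨hgK', hgW'⟩, hi, rfl⟩ <;>
  obtain ⟨hL, rfl⟩ := Nat.pair_eq_pair.mp hi
  · subst hL
    obtain ⟨rfl, rfl⟩ := P.eq_of_rng_eq hg hg' hr
    rfl
  · subst hL
    exact absurd (hr ▸ hgW) ((hK hgK').2.symm ▸ hgW')
  · subst hL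
    exact absurd (hr ▸ hgW') ((hK hgK).2.symm ▸ hgW)
  · obtain rfl := Nat.succ_injective hL
    obtain rfl : g = g' := by rw [← (hK hgK).2, hr, (hK hgK').2]
    rfl

lemma injOn_src_bisection (hK : K ⊆ S.units) : P.bisection.InjOn (S.prod Rho).src := by
  rintro ⟨g, i, j⟩ hp ⟨g', i', j'⟩ hp' he
  obtain ⟨hs, rfl, -⟩ : S.src g = S.src g' ∧ j = j' ∧ j = j' := by
    simpa only [prod, Rho, Prod.mk.injEq] using he
  rw [mem_bisection] at hp hp'
  rcases hp with ⟨L, n, t, ⟨hg, hgW⟩, rfl, rfl⟩ | ⟨L, t, ⟨hgK, hgW⟩, rfl, rfl⟩ <;>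
  rcases hp' with ⟨L', n', t', ⟨hg', hgW'⟩, rfl, hj⟩ | ⟨L', t', ⟨hgK', hgW'⟩, rfl, hj⟩ <;>
  obtain ⟨hL, ht⟩ := Nat.pair_eq_pair.mp hj <;> subst hL
  · obtain ⟨rfl, rfl⟩ := Nat.pair_eq_pair.mp ht
    obtain rfl := (P.isCompactOpenBisection n).2.injOn_src hg hg' hs
    rfl
  · subst ht
    exact absurd (hs ▸ P.src_mem_forward_succ hg hgW) ((hK hgK').1.symm ▸ hgW')
  · subst ht
    exact absurd (hs ▸ P.src_mem_forward_succ hg' hgW') ((hK hgK).1.symm ▸ hgW)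
  · subst ht
    obtain rfl : g = g' := by rw [← (hK hgK).1, hs, (hK hgK').1]
    rfl

lemma rng_image_bisection :
    (S.prod Rho).rng '' P.bisection = {p | p.1 ∈ S.units ∧ p.2.1 = p.2.2} := by
  refine subset_antisymm (Set.image_subset_iff.mpr fun p _ => ⟨S.rng_mem_units p.1, rfl⟩) ?_
  rintro ⟨u, i, j⟩ ⟨hu, hij : i = j⟩
  subst hij
  obtain ⟨L, t, rfl⟩ : ∃ L t, Nat.pair L t = i := ⟨_, _, Nat.pair_unpair i⟩
  by_cases huW : u ∈ P.forward L t
  · obtain ⟨n, g, hg, rfl⟩ := P.exists_mem_piece hu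
    exact ⟨(g, Nat.pair L t, Nat.pair L (Nat.pair n t)),
      P.mem_bisection.mpr (Or.inl ⟨L, n, t, ⟨hg, huW⟩, rfl, rfl⟩), rfl⟩
  cases L with
  | zero => exact absurd hu huW
  | succ L =>
    have huK : u ∈ K := by_contra fun huK => huW (Or.inl ⟨hu, huK⟩)
    refine ⟨(u, Nat.pair (L + 1) t, Nat.pair L t),
      P.mem_bisection.mpr (Or.inr ⟨L, t, ⟨huK, huW⟩, rfl, rfl⟩), ?_⟩
    simp only [prod, Rho, hu.2]

lemma src_image_bisection (hK : K ⊆ S.units) :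
    (S.prod Rho).src '' P.bisection = {p | p.1 ∈ K ∧ p.2.1 = p.2.2} := by
  refine subset_antisymm ?_ ?_
  · rintro _ ⟨⟨g, i, j⟩, hp, rfl⟩
    refine ⟨show S.src g ∈ K from ?_, rfl⟩
    rcases P.mem_bisection.mp hp with ⟨L, n, t, ⟨hg, -⟩, -, -⟩ | ⟨L, t, ⟨hgK, -⟩, -, -⟩
    · exact P.src_image_subset n ⟨g, hg, rfl⟩
    · exact (hK hgK).1.symm ▸ hgK
  rintro ⟨x, j, j'⟩ ⟨hx, hj : j = j'⟩
  subst hj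
  obtain ⟨L, n, t, rfl⟩ : ∃ L n t, Nat.pair L (Nat.pair n t) = j :=
    ⟨_, _, _, by rw [Nat.pair_unpair, Nat.pair_unpair]⟩
  by_cases hxs : x ∈ S.src '' (P.piece n ∩ S.rng ⁻¹' P.forward L t)
  · obtain ⟨g, hg, rfl⟩ := hxs
    exact ⟨(g, Nat.pair L t, Nat.pair L (Nat.pair n t)),
      P.mem_bisection.mpr (Or.inl ⟨L, n, t, hg, rfl, rfl⟩), rfl⟩
  have hxW : x ∉ P.forward (L + 1) (Nat.pair n t) := by
    rw [forward_succ_pair]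
    rintro (h | h)
    exacts [h.2 hx, hxs h]
  refine ⟨(x, Nat.pair (L + 1) (Nat.pair n t), Nat.pair L (Nat.pair n t)),
    P.mem_bisection.mpr (Or.inr ⟨L, _, ⟨hx, hxW⟩, rfl, rfl⟩), ?_⟩
  simp only [prod, Rho, (hK hx).1]

lemma isOpenBisection_bisection (hS : S.IsAmple) (hK : S.IsUnitClopen K) :
    (S.prod Rho).IsOpenBisection P.bisection :=
  hS.isOpenBisection_prod_Rho_of_injOn (P.isOpen_bisection hS hK) (P.injOn_rng_bisection hK.1)
    (P.injOn_src_bisection hK.1)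

end GroupoidStruct.RangePartition

open GroupoidStruct in
/-- For an ample groupoid with σ-compact unit space and a clopen `G`-full `K ⊆ G⁰`, there is an
open bisection `Y ⊆ G × ℛ` with `r(Y) = G⁰ × ℕ` and `s(Y) = K × ℕ`
(the unit space of `G × ℛ` being identified with `{(u,(i,i)) : u ∈ G⁰, i ∈ ℕ}`). -/
theorem exists_unitary_bisection
    {G : Type u} [TopologicalSpace G] (S : GroupoidStruct G)
    (hS : S.IsAmple) (hc : IsSigmaCompact S.units)
    {K : Set G} (hK : S.IsUnitClopen K) (hKf : S.IsFull K) :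
    ∃ Y : Set (G × ℕ × ℕ),
      (S.prod Rho).IsOpenBisection Y ∧
      (S.prod Rho).rng '' Y = {p : G × ℕ × ℕ | p.1 ∈ S.units ∧ p.2.1 = p.2.2} ∧
      (S.prod Rho).src '' Y = {p : G × ℕ × ℕ | p.1 ∈ K ∧ p.2.1 = p.2.2} := by
  obtain ⟨P⟩ := hS.nonempty_rangePartition hc (hS.isOpen_of_isUnitClopen hK) hKf
  exact ⟨P.bisection, P.isOpenBisection_bisection hS hK, P.rng_image_bisection,
    P.src_image_bisection hK.1⟩
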